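/- The set of all finite sequences of positive integers (paths) with value of their type at most a given natural number w is finite, and its cardinality is at most ∑ over types (x,y) with y·2^y·x^y ≤ w of (x^y - (x-1)^y). -/

import Mathlib

/-!
A path of type `(m, δ)` is a word `p : Fin δ → ℕ` with entries in `[1, m]` that is not a word
with entries in `[1, m - 1]`, so there are at most `m ^ δ - (m - 1) ^ δ` of them. A path of value
at most `w` has type in `[1, w] × [1, w]`, since both `m` and `δ` are bounded by `δ·2^δ·m^δ`;
summing the fibre counts over these types gives the bound, and finiteness along the way.
-/

open Finset

def pathsOfType (m δ : ℕ) : Finset (List ℕ) :=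
  (Fintype.piFinset (fun _ : Fin δ => Icc 1 m) \
    Fintype.piFinset (fun _ : Fin δ => Icc 1 (m - 1))).image List.ofFn

theorem card_pathsOfType_le (m δ : ℕ) : #(pathsOfType m δ) ≤ m ^ δ - (m - 1) ^ δ := by
  have hsub : Fintype.piFinset (fun _ : Fin δ => Icc 1 (m - 1)) ⊆
      Fintype.piFinset (fun _ : Fin δ => Icc 1 m) :=
    Fintype.piFinset_subset _ _ fun _ => Icc_subset_Icc_right (Nat.sub_le m 1)
  calc #(pathsOfType m δ) ≤ #(Fintype.piFinset (fun _ : Fin δ => Icc 1 m) \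
        Fintype.piFinset (fun _ : Fin δ => Icc 1 (m - 1))) := card_image_le
    _ = m ^ δ - (m - 1) ^ δ := by
      simp [card_sdiff_of_subset hsub, Fintype.card_piFinset]

theorem List.le_foldr_max {l : List ℕ} {p : ℕ} (hp : p ∈ l) : p ≤ l.foldr max 0 :=
  List.le_max_of_le hp le_rfl

theorem List.foldr_max_mem {l : List ℕ} (hl : l ≠ []) : l.foldr max 0 ∈ l :=
  List.maximum_mem (List.foldr_max_of_ne_nil hl).symm

theorem mem_pathsOfType {l : List ℕ} (hl : l ≠ []) (hpos : ∀ p ∈ l, 1 ≤ p) :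
    l ∈ pathsOfType (l.foldr max 0) l.length := by
  refine mem_image.mpr ⟨l.get, mem_sdiff.mpr ⟨?_, ?_⟩, List.ofFn_get l⟩
  · refine Fintype.mem_piFinset.mpr fun i => mem_Icc.mpr ?_
    exact ⟨hpos _ (l.get_mem i), List.le_foldr_max (l.get_mem i)⟩
  · have hmax := List.foldr_max_mem hl
    obtain ⟨i, hi⟩ := List.mem_iff_get.mp hmax
    have hmax_pos := hpos _ hmax
    simp only [Fintype.mem_piFinset, mem_Icc, not_forall]
    exact ⟨i, by omega⟩

theorem le_of_mul_two_pow_mul_pow_le {m δ w : ℕ} (hm : 1 ≤ m) (hδ : 1 ≤ δ) (hval : δ * 2 ^ δ * m ^ δ ≤ w) :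
    m ≤ w ∧ δ ≤ w := by
  have h2 : 1 ≤ 2 ^ δ := Nat.one_le_two_pow
  have hmδ : m ≤ m ^ δ := Nat.le_self_pow (by omega) m
  have hpow : 1 ≤ m ^ δ := Nat.one_le_pow _ _ hm
  constructor <;> nlinarith [Nat.mul_le_mul hδ h2]

/-- The type of a nonempty path `π = (p_1,…,p_δ)` of positive integers is
`(max_i p_i, δ)` and its value is `δ·2^δ·m^δ` for type `(m,δ)`. The set of all such
paths of value at most `w` is finite, with cardinality at most
`∑_{(x,y) : y·2^y·x^y ≤ w} (x^y - (x-1)^y)`. -/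
theorem stmt8 (w : ℕ) :
    {π : List ℕ | π ≠ [] ∧ (∀ p ∈ π, 1 ≤ p) ∧
      π.length * 2 ^ π.length * (π.foldr max 0) ^ π.length ≤ w}.Finite ∧
    Nat.card {π : List ℕ | π ≠ [] ∧ (∀ p ∈ π, 1 ≤ p) ∧
      π.length * 2 ^ π.length * (π.foldr max 0) ^ π.length ≤ w} ≤
    ∑ q ∈ (Finset.Icc 1 w ×ˢ Finset.Icc 1 w).filter
      (fun q => q.2 * 2 ^ q.2 * q.1 ^ q.2 ≤ w), (q.1 ^ q.2 - (q.1 - 1) ^ q.2) := by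
  set T := (Icc 1 w ×ˢ Icc 1 w).filter fun q => q.2 * 2 ^ q.2 * q.1 ^ q.2 ≤ w
  set S := {π : List ℕ | π ≠ [] ∧ (∀ p ∈ π, 1 ≤ p) ∧
    π.length * 2 ^ π.length * (π.foldr max 0) ^ π.length ≤ w}
  have hS : S ⊆ ↑(T.biUnion fun q => pathsOfType q.1 q.2) := by
    rintro π ⟨hne, hpos, hval⟩
    have hm : 1 ≤ π.foldr max 0 := hpos _ (List.foldr_max_mem hne)
    have hδ : 1 ≤ π.length := List.length_pos_iff.mpr hne
    obtain ⟨hmw, hδw⟩ := le_of_mul_two_pow_mul_pow_le hm hδ hval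
    refine mem_biUnion.mpr ⟨(π.foldr max 0, π.length), ?_, mem_pathsOfType hne hpos⟩
    simp only [T, mem_filter, mem_product, mem_Icc]
    exact ⟨⟨⟨hm, hmw⟩, hδ, hδw⟩, hval⟩
  refine ⟨(T.biUnion _).finite_toSet.subset hS, ?_⟩
  calc Nat.card S ≤ #(T.biUnion fun q => pathsOfType q.1 q.2) := by
        rw [Nat.card_coe_set_eq, ← Set.ncard_coe_finset]
        exact Set.ncard_le_ncard hS (finite_toSet _)
    _ ≤ ∑ q ∈ T, #(pathsOfType q.1 q.2) := card_biUnion_le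
    _ ≤ ∑ q ∈ T, (q.1 ^ q.2 - (q.1 - 1) ^ q.2) :=
        sum_le_sum fun q _ => card_pathsOfType_le q.1 q.2
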